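/- arXiv:2501.02915 — 3 statements merged into one kernel-verified Lean document; each statement's English description precedes it below -/
import Mathlib

section
/- Let γ > 1 and let ρ̄ ∈ [δ, R] ⊂ (0,∞). Then there exists C = C(γ, δ, R) > 0 such that for all ρ ≥ 0 with ρ ≤ ρ̄/2 or ρ ≥ 2ρ̄, one has h_γ(ρ|ρ̄) ≥ C·|ρ − ρ̄|^γ. -/
set_option maxHeartbeats 1000000

open Real

private lemma aux_half (γ : ℝ) (hγ : 1 < γ) : 0 < (1/2:ℝ) ^ γ - 1 + γ / 2 := by
  have hlog : Real.log 2 < 1 := by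
    have := Real.log_two_lt_d9; norm_num at this ⊢; linarith
  have h1 : (1/2:ℝ) ^ (γ - 1) = Real.exp (Real.log (1/2) * (γ - 1)) :=
    Real.rpow_def_of_pos (by norm_num) _
  have h2 : Real.log (1/2:ℝ) = -Real.log 2 := by
    rw [one_div, Real.log_inv]
  have h3 : (1 : ℝ) - (γ - 1) * Real.log 2 ≤ (1/2:ℝ) ^ (γ - 1) := by
    rw [h1, h2]
    have := Real.add_one_le_exp (-Real.log 2 * (γ - 1))
    linarith
  have hlog0 : 0 < Real.log 2 := Real.log_pos (by norm_num)
  have h4 : (2 : ℝ) - γ < (1/2:ℝ) ^ (γ - 1) := by nlinarith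
  have h5 : (1/2:ℝ) ^ γ = (1/2:ℝ) ^ (γ - 1) * (1/2) := by
    rw [← Real.rpow_add_one (by norm_num : (1/2:ℝ) ≠ 0) (γ - 1)]
    norm_num
  nlinarith

private lemma aux_two (γ : ℝ) (hγ : 1 < γ) : 0 < (2:ℝ) ^ γ - 1 - γ := by
  have hlog : (0.6931471803 : ℝ) < Real.log 2 := Real.log_two_gt_d9
  have h1 : (2:ℝ) ^ (γ - 1) = Real.exp (Real.log 2 * (γ - 1)) :=
    Real.rpow_def_of_pos (by norm_num) _
  have h3 : (1 : ℝ) + Real.log 2 * (γ - 1) ≤ (2:ℝ) ^ (γ - 1) := by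
    rw [h1]
    have := Real.add_one_le_exp (Real.log 2 * (γ - 1))
    linarith
  have h5 : (2:ℝ) ^ γ = (2:ℝ) ^ (γ - 1) * 2 := by
    rw [← Real.rpow_add_one (by norm_num : (2:ℝ) ≠ 0) (γ - 1)]
    norm_num
  nlinarith

private lemma key_lemma (γ : ℝ) (hγ : 1 < γ) :
    ∃ c > (0:ℝ), ∀ x : ℝ, 0 ≤ x → (x ≤ 1/2 ∨ 2 ≤ x) →
      c * |x - 1| ^ γ ≤ x ^ γ - 1 - γ * (x - 1) := by
  have hγ1 : (0:ℝ) < γ - 1 := by linarith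
  obtain ⟨A, hA⟩ : ∃ A : ℝ, A = max 1 ((4*γ) ^ (γ-1)⁻¹) := ⟨_, rfl⟩
  have hA1 : (1:ℝ) ≤ A := hA ▸ le_max_left _ _
  have hApos : (0:ℝ) < A := by linarith
  have hAγpos : (0:ℝ) < A ^ (γ-1) := Real.rpow_pos_of_pos hApos _
  have hg2 : 0 < (2:ℝ) ^ γ - 1 - γ := aux_two γ hγ
  have hg12 : 0 < (1/2:ℝ) ^ γ - 1 + γ / 2 := aux_half γ hγ
  obtain ⟨K, hK⟩ : ∃ K : ℝ, K = (1/2:ℝ) ^ γ - 1 + γ / 2 := ⟨_, rfl⟩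
  have hKpos : 0 < K := hK ▸ hg12
  obtain ⟨c₁, hc₁⟩ : ∃ c₁ : ℝ, c₁ = ((2:ℝ) ^ γ - 1 - γ) / A ^ (γ-1) := ⟨_, rfl⟩
  have hc₁pos : 0 < c₁ := hc₁ ▸ div_pos hg2 hAγpos
  obtain ⟨c, hc⟩ : ∃ c : ℝ, c = min K (min c₁ (1/2)) := ⟨_, rfl⟩
  have hcK : c ≤ K := hc ▸ min_le_left _ _
  have hcc₁ : c ≤ c₁ := hc ▸ le_trans (min_le_right _ _) (min_le_left _ _)
  have hc12 : c ≤ 1/2 := hc ▸ le_trans (min_le_right _ _) (min_le_right _ _)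
  have hcpos : 0 < c := by rw [hc]; positivity
  refine ⟨c, hcpos, ?_⟩
  intro x hx hcase
  have hconv : ConvexOn ℝ (Set.Ici 0) fun y : ℝ => y ^ γ := convexOn_rpow hγ.le
  rcases hcase with h | h
  · -- x ≤ 1/2
    obtain ⟨u, hu⟩ : ∃ u : ℝ, u = 1 - x := ⟨_, rfl⟩
    have hu0 : 0 < u := by rw [hu]; linarith
    have hu2 : 1/2 ≤ u := by rw [hu]; linarith
    have hu1 : u ≤ 1 := by rw [hu]; linarith
    have habs : |x - 1| = u := by
      rw [abs_sub_comm, hu, abs_of_nonneg (by linarith : (0:ℝ) ≤ 1 - x)]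
    obtain ⟨a, ha⟩ : ∃ a : ℝ, a = 1 / (2*u) := ⟨_, rfl⟩
    have ha0 : 0 ≤ a := by rw [ha]; positivity
    have ha1 : a ≤ 1 := by
      rw [ha, div_le_one (by positivity)]; linarith
    have hch := hconv.2 (Set.mem_Ici.mpr hx) (Set.mem_Ici.mpr zero_le_one)
      ha0 (by linarith : (0:ℝ) ≤ 1 - a) (by ring)
    simp only [smul_eq_mul, mul_one, Real.one_rpow] at hch
    have hmid : a * x + (1 - a) = 1/2 := by
      rw [ha, hu]
      have : (1:ℝ) - x ≠ 0 := by linarith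
      field_simp
      ring
    rw [hmid] at hch
    have h2u : (2*u) * (a * x ^ γ + (1 - a)) = x ^ γ + 2*u - 1 := by
      rw [ha]; field_simp; ring
    have hxg : 2*u*((1/2:ℝ) ^ γ) ≤ x ^ γ + 2*u - 1 := by
      rw [← h2u]
      exact mul_le_mul_of_nonneg_left hch (by positivity)
    have huγ : u ^ γ ≤ u := by
      have := Real.rpow_le_rpow_of_exponent_ge hu0 hu1 hγ.le
      rwa [Real.rpow_one] at this
    have hprod : c * u ^ γ ≤ K * u :=
      mul_le_mul hcK huγ (Real.rpow_nonneg hu0.le γ) hKpos.le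
    have hfin : K * u ≤ x ^ γ - 1 - γ * (x - 1) := by
      have hx1 : x - 1 = -u := by rw [hu]; ring
      rw [hx1, hK]
      nlinarith [hxg, mul_pos hu0 hg12]
    rw [habs]
    exact le_trans hprod hfin
  · -- 2 ≤ x
    obtain ⟨u, hu⟩ : ∃ u : ℝ, u = x - 1 := ⟨_, rfl⟩
    have hu1 : (1:ℝ) ≤ u := by rw [hu]; linarith
    have hu0 : (0:ℝ) < u := by linarith
    have habs : |x - 1| = u := by rw [hu.symm] at *; exact abs_of_nonneg (by linarith)
    obtain ⟨a, ha⟩ : ∃ a : ℝ, a = (x - 2) / u := ⟨_, rfl⟩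
    have ha0 : 0 ≤ a := by rw [ha]; apply div_nonneg _ hu0.le; linarith
    have hb0 : (0:ℝ) ≤ 1 - a := by
      rw [ha, sub_nonneg, div_le_one hu0]; linarith
    have hch := hconv.2 (Set.mem_Ici.mpr zero_le_one)
      (Set.mem_Ici.mpr (by linarith : (0:ℝ) ≤ x)) ha0 hb0 (by ring)
    simp only [smul_eq_mul, mul_one, one_mul, Real.one_rpow] at hch
    have hmid : a + (1 - a) * x = 2 := by
      rw [ha, hu]
      have : x - 1 ≠ 0 := by linarith
      field_simp
      ring
    rw [hmid] at hch
    have h1a : 1 - a = 1/u := by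
      rw [ha, hu]
      have : x - 1 ≠ 0 := by linarith
      field_simp
      ring
    have hchord : u * (2:ℝ) ^ γ - u + 1 ≤ x ^ γ := by
      have hmul := mul_le_mul_of_nonneg_left hch hu0.le
      rw [h1a, ha] at hmul
      have heq : u * ((x - 2)/u + 1/u * x ^ γ) = x ^ γ + x - 2 := by
        field_simp
        ring
      rw [heq] at hmul
      have hxu : x = u + 1 := by rw [hu]; ring
      nlinarith [hmul]
    have huγeq : u ^ γ = u * u ^ (γ - 1) := by
      nth_rewrite 1 [show γ = (γ - 1) + 1 by ring]
      rw [Real.rpow_add_one hu0.ne' (γ - 1)]; ring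
    rw [habs]
    have hx1u : x - 1 = u := hu.symm
    rw [hx1u]
    rcases le_or_gt u A with hcaseA | hcaseA
    · -- small u : use chord
      have huA : u ^ (γ-1) ≤ A ^ (γ-1) :=
        Real.rpow_le_rpow hu0.le hcaseA (by linarith)
      have h1 : u ^ γ ≤ u * A ^ (γ-1) := by
        rw [huγeq]; exact mul_le_mul_of_nonneg_left huA hu0.le
      have h2 : c * u ^ γ ≤ c₁ * (u * A ^ (γ-1)) :=
        mul_le_mul hcc₁ h1 (Real.rpow_nonneg hu0.le γ) hc₁pos.le
      have h3 : c₁ * (u * A ^ (γ-1)) = u * ((2:ℝ) ^ γ - 1 - γ) := by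
        have h3' : c₁ * A ^ (γ-1) = (2:ℝ) ^ γ - 1 - γ := by
          rw [hc₁, div_mul_cancel₀ _ hAγpos.ne']
        rw [← h3']; ring
      rw [h3] at h2
      have h4 : u * ((2:ℝ) ^ γ - 1 - γ) = u * (2:ℝ) ^ γ - u - u * γ := by ring
      rw [h4] at h2
      linarith [h2, hchord]
    · -- large u : use monotonicity
      have hAu : (4*γ) ^ (γ-1)⁻¹ ≤ u := by
        calc (4*γ) ^ (γ-1)⁻¹ ≤ A := hA ▸ le_max_right _ _
          _ ≤ u := hcaseA.le
      have h4γ : (4*γ) ≤ u ^ (γ-1) := by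
        have h5 : ((4*γ) ^ (γ-1)⁻¹) ^ (γ-1) ≤ u ^ (γ-1) :=
          Real.rpow_le_rpow (Real.rpow_nonneg (by linarith) _) hAu (by linarith)
        rwa [← Real.rpow_mul (by linarith : (0:ℝ) ≤ 4*γ),
          inv_mul_cancel₀ hγ1.ne', Real.rpow_one] at h5
      have hmono : u ^ γ ≤ x ^ γ :=
        Real.rpow_le_rpow hu0.le (by rw [hu]; linarith) (by linarith)
      have hcu : c * u ^ γ ≤ (1/2) * u ^ γ :=
        mul_le_mul_of_nonneg_right hc12 (Real.rpow_nonneg hu0.le γ)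
      have hbig : (1/2) * u ^ γ + 1 + γ * u ≤ u ^ γ := by
        rw [huγeq]
        nlinarith [mul_le_mul_of_nonneg_left h4γ hu0.le,
          mul_nonneg (by linarith : (0:ℝ) ≤ γ - 1) (by linarith : (0:ℝ) ≤ u - 1)]
      linarith [hcu, hbig, hmono]

/-- γ-power lower bound for the relative entropy `h_γ(ρ|ρ̄)` in the far regime
`ρ ≤ ρ̄/2` or `ρ ≥ 2ρ̄`, uniformly for `ρ̄ ∈ [δ, R]`. -/
theorem hgamma_power_lower (γ δ R : ℝ) (hγ : 1 < γ) (hδ : 0 < δ) (hδR : δ ≤ R) :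
    ∃ C > (0:ℝ), ∀ ρ ρb : ℝ, 0 ≤ ρ → ρb ∈ Set.Icc δ R →
      (ρ ≤ ρb / 2 ∨ 2 * ρb ≤ ρ) →
      C * |ρ - ρb| ^ γ ≤
        ρ ^ γ / (γ - 1) - ρb ^ γ / (γ - 1) - (γ * ρb ^ (γ - 1) / (γ - 1)) * (ρ - ρb) := by
  have hγ1 : (0:ℝ) < γ - 1 := by linarith
  obtain ⟨c, hcpos, hkey⟩ := key_lemma γ hγ
  refine ⟨c / (γ - 1), by positivity, ?_⟩
  intro ρ ρb hρ hρb hfar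
  have hb0 : 0 < ρb := lt_of_lt_of_le hδ hρb.1
  obtain ⟨x, hx⟩ : ∃ x : ℝ, x = ρ / ρb := ⟨_, rfl⟩
  have hx0 : 0 ≤ x := by rw [hx]; exact div_nonneg hρ hb0.le
  have hρeq : ρ = ρb * x := by rw [hx]; field_simp
  have hxcase : x ≤ 1/2 ∨ 2 ≤ x := by
    rcases hfar with h | h
    · left; rw [hx, div_le_div_iff₀ hb0 (by norm_num : (0:ℝ) < 2)]; linarith
    · right; rw [hx, le_div_iff₀ hb0]; linarith
  have hkx := hkey x hx0 hxcase
  have hbγ : 0 < ρb ^ γ := Real.rpow_pos_of_pos hb0 _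
  have h1 : ρ ^ γ = ρb ^ γ * x ^ γ := by
    rw [hρeq, Real.mul_rpow hb0.le hx0]
  have h2 : ρb ^ (γ - 1) * ρb = ρb ^ γ := by
    rw [← Real.rpow_add_one hb0.ne' (γ - 1)]; norm_num
  have hsub : ρ - ρb = ρb * (x - 1) := by rw [hρeq]; ring
  have h3 : |ρ - ρb| ^ γ = ρb ^ γ * |x - 1| ^ γ := by
    rw [hsub, abs_mul, abs_of_pos hb0, Real.mul_rpow hb0.le (abs_nonneg _)]
  have hR : ρ ^ γ / (γ - 1) - ρb ^ γ / (γ - 1) - (γ * ρb ^ (γ - 1) / (γ - 1)) * (ρ - ρb)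
      = ρb ^ γ / (γ - 1) * (x ^ γ - 1 - γ * (x - 1)) := by
    have e1 : (γ * ρb ^ (γ - 1) / (γ - 1)) * (ρ - ρb) = γ * (ρb ^ γ) * (x - 1) / (γ - 1) := by
      rw [hsub, ← h2]; ring
    rw [h1, e1]; ring
  rw [h3, hR]
  have hm := mul_le_mul_of_nonneg_left hkx (le_of_lt (div_pos hbγ hγ1))
  calc c / (γ - 1) * (ρb ^ γ * |x - 1| ^ γ)
      = ρb ^ γ / (γ - 1) * (c * |x - 1| ^ γ) := by ring
    _ ≤ ρb ^ γ / (γ - 1) * (x ^ γ - 1 - γ * (x - 1)) := hm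
end

section
/- Let γ > 1 and 0 < δ ≤ R. There exists a constant C = C(γ, δ, R) > 0 such that for all ρ ≥ 0 and all ρ̄ ∈ [δ, R], |ρ^{γ/2} − ρ̄^{γ/2}|² ≤ C · h_γ(ρ|ρ̄), where h_γ(ρ) = ρ^γ/(γ−1) and h_γ(ρ|ρ̄) = h_γ(ρ) − h_γ(ρ̄) − h_γ'(ρ̄)(ρ − ρ̄). -/
/-- Core scaled inequality: quantitative Bregman bound for `t ↦ t²` vs `t ↦ t^q`. -/
lemma core_bregman (p : ℝ) (hp : 1 < p) (y : ℝ) (hy : 0 ≤ y) :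
    p * (min (2 / p) (2 - 2 / p) / 4) * (y - 1) ^ 2 ≤
      y ^ 2 - 1 - p * (y ^ (2 / p) - 1) := by
  have hp0 : 0 < p := lt_trans one_pos hp
  set q : ℝ := 2 / p with hqdef
  have hq0 : 0 < q := by positivity
  have hq2 : q < 2 := by
    rw [hqdef, div_lt_iff₀ hp0]; nlinarith
  set κ : ℝ := min q (2 - q) / 4 with hκdef
  have hκ0 : 0 < κ := by
    have := lt_min hq0 (by linarith : (0:ℝ) < 2 - q)
    positivity
  have hκq : κ ≤ q / 4 := by
    have := min_le_left q (2 - q); rw [hκdef]; linarith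
  have hκq2 : κ ≤ (2 - q) / 4 := by
    have := min_le_right q (2 - q); rw [hκdef]; linarith
  have hpq : p * q = 2 := by
    rw [hqdef]; field_simp
  rcases eq_or_lt_of_le hy with hy0 | hy0
  · rw [← hy0, Real.zero_rpow (ne_of_gt hq0)]
    nlinarith
  · set w₁ : ℝ := q / 2 - κ with hw₁
    set w₂ : ℝ := 2 * κ with hw₂
    set w₃ : ℝ := 1 - q / 2 - κ with hw₃
    have hw₁0 : 0 ≤ w₁ := by rw [hw₁]; linarith
    have hw₂0 : 0 ≤ w₂ := by rw [hw₂]; linarith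
    have hw₃0 : 0 ≤ w₃ := by rw [hw₃]; linarith
    have key := Real.geom_mean_le_arith_mean3_weighted hw₁0 hw₂0 hw₃0
      (by positivity : (0:ℝ) ≤ y ^ 2) hy (zero_le_one) (by rw [hw₁, hw₂, hw₃]; ring)
    have lhs_eq : (y ^ 2) ^ w₁ * y ^ w₂ * (1:ℝ) ^ w₃ = y ^ q := by
      rw [Real.one_rpow, mul_one]
      have h2 : (y:ℝ) ^ (2:ℕ) = y ^ ((2:ℕ):ℝ) := (Real.rpow_natCast y 2).symm
      rw [h2, ← Real.rpow_mul hy, ← Real.rpow_add hy0]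
      norm_num
      ring_nf
      congr 1; rw [hw₁, hw₂]; ring
    rw [lhs_eq] at key
    rw [mul_one] at key
    have key2 : p * y ^ q ≤ p * (w₁ * y ^ 2 + w₂ * y + w₃) :=
      mul_le_mul_of_nonneg_left key (le_of_lt hp0)
    have expand : p * (w₁ * y ^ 2 + w₂ * y + w₃)
        = (1 - p * κ) * y ^ 2 + 2 * (p * κ) * y + (p - 1 - p * κ) := by
      rw [hw₁, hw₂, hw₃]
      linear_combination ((y ^ 2 - 1) / 2) * hpq
    rw [expand] at key2
    nlinarith [key2]

/-- `|ρ^{γ/2} − ρ̄^{γ/2}|² ≤ C·h_γ(ρ|ρ̄)` for all `ρ ≥ 0` and `ρ̄ ∈ [δ,R]`,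
with `C` depending only on `γ, δ, R`. -/
theorem rpow_half_sq_le_relative_entropy (γ δ R : ℝ) (hγ : 1 < γ) (hδ : 0 < δ) (hδR : δ ≤ R) :
    ∃ C > (0:ℝ), ∀ ρ ρb : ℝ, 0 ≤ ρ → ρb ∈ Set.Icc δ R →
      |ρ ^ (γ / 2) - ρb ^ (γ / 2)| ^ 2 ≤
        C * (ρ ^ γ / (γ - 1) - ρb ^ γ / (γ - 1) - (γ * ρb ^ (γ - 1) / (γ - 1)) * (ρ - ρb)) := by
  have hγ0 : 0 < γ := lt_trans one_pos hγ
  set q : ℝ := 2 / γ with hqdef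
  have hq0 : 0 < q := by positivity
  have hq2 : q < 2 := by rw [hqdef, div_lt_iff₀ hγ0]; nlinarith
  set κ : ℝ := min q (2 - q) / 4 with hκdef
  have hκ0 : 0 < κ := by
    have := lt_min hq0 (by linarith : (0:ℝ) < 2 - q)
    positivity
  have hγ1 : (0:ℝ) < γ - 1 := by linarith
  refine ⟨(γ - 1) / (γ * κ), by positivity, ?_⟩
  intro ρ ρb hρ hmem
  obtain ⟨hδρb, hρbR⟩ := hmem
  have hρb0 : 0 < ρb := lt_of_lt_of_le hδ hδρb
  set x : ℝ := ρ / ρb with hxdef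
  have hx : 0 ≤ x := div_nonneg hρ (le_of_lt hρb0)
  have hcore := core_bregman γ hγ (x ^ (γ / 2)) (Real.rpow_nonneg hx _)
  have hyq : (x ^ (γ / 2)) ^ (2 / γ) = x := by
    rw [← Real.rpow_mul hx]
    have : γ / 2 * (2 / γ) = 1 := by field_simp
    rw [this, Real.rpow_one]
  have hy2 : (x ^ (γ / 2)) ^ (2:ℕ) = x ^ γ := by
    rw [← Real.rpow_natCast (x ^ (γ / 2)) 2, ← Real.rpow_mul hx]
    norm_num
  rw [hyq, hy2] at hcore
  -- hcore : γ * κ * (x ^ (γ/2) - 1) ^ 2 ≤ x ^ γ - 1 - γ * (x - 1)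
  have hxg : x ^ γ = ρ ^ γ / ρb ^ γ := by
    rw [hxdef, Real.div_rpow hρ (le_of_lt hρb0)]
  have hxg2 : x ^ (γ / 2) = ρ ^ (γ / 2) / ρb ^ (γ / 2) := by
    rw [hxdef, Real.div_rpow hρ (le_of_lt hρb0)]
  have hρbγ : (0:ℝ) < ρb ^ γ := Real.rpow_pos_of_pos hρb0 _
  have hρbγ2 : (0:ℝ) < ρb ^ (γ / 2) := Real.rpow_pos_of_pos hρb0 _
  have hsplit : ρb ^ γ = ρb ^ (γ / 2) * ρb ^ (γ / 2) := by
    rw [← Real.rpow_add hρb0]; ring_nf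
  have hsub : ρb ^ (γ - 1) * ρb = ρb ^ γ := by
    nth_rewrite 2 [show ρb = ρb ^ (1:ℝ) from (Real.rpow_one ρb).symm]
    rw [← Real.rpow_add hρb0]; ring_nf
  -- multiply hcore by ρb^γ
  have hmul := mul_le_mul_of_nonneg_left hcore (le_of_lt hρbγ)
  have hE : ρb ^ γ * (x ^ γ - 1 - γ * (x - 1))
      = ρ ^ γ - ρb ^ γ - γ * ρb ^ (γ - 1) * (ρ - ρb) := by
    rw [hxg, hxdef]
    field_simp
    linear_combination (γ * (ρ - ρb)) * hsub
  have hL : ρb ^ γ * (γ * κ * (x ^ (γ / 2) - 1) ^ 2)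
      = γ * κ * (ρ ^ (γ / 2) - ρb ^ (γ / 2)) ^ 2 := by
    rw [hxg2, hsplit]
    field_simp
  rw [hE, hL] at hmul
  -- hmul : γ * κ * (ρ^{γ/2} - ρb^{γ/2})^2 ≤ ρ^γ - ρb^γ - γ ρb^{γ-1} (ρ - ρb)
  have hγκ : (0:ℝ) < γ * κ := by positivity
  have h2 : (ρ ^ (γ / 2) - ρb ^ (γ / 2)) ^ 2
      ≤ (ρ ^ γ - ρb ^ γ - γ * ρb ^ (γ - 1) * (ρ - ρb)) / (γ * κ) := by
    rw [le_div_iff₀ hγκ]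
    nlinarith [hmul]
  rw [sq_abs]
  refine le_trans h2 (le_of_eq ?_)
  field_simp
end

section
/- Let μ(ρ) = ρ^{(s+3)/2} with s ≥ −1 and γ ≥ s + 2, and let ρ̄ ∈ [δ, R] ⊂ (0,∞). Then there exists C = C(γ, s, δ, R) > 0 such that for all ρ ≥ 0: ρ·|μ'(ρ) − μ'(ρ̄)|² ≤ C · h_γ(ρ|ρ̄), where h_γ(ρ) = ρ^γ/(γ−1). -/
/-- `|x^a - 1| ≤ |x^b - 1|` for `0 ≤ a ≤ b`, `0 ≤ x`. -/
lemma abs_rpow_sub_one_le (a b x : ℝ) (ha : 0 ≤ a) (hab : a ≤ b) (hx : 0 ≤ x) :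
    |x ^ a - 1| ≤ |x ^ b - 1| := by
  rcases eq_or_lt_of_le hx with h0 | hx
  · rcases eq_or_lt_of_le ha with ha0 | ha0
    · simp [← h0, ← ha0]
    · have hb0 : 0 < b := lt_of_lt_of_le ha0 hab
      rw [← h0, Real.zero_rpow (ne_of_gt ha0), Real.zero_rpow (ne_of_gt hb0)]
  · rcases le_total x 1 with hx1 | hx1
    · have h1 : x ^ b ≤ x ^ a := Real.rpow_le_rpow_of_exponent_ge hx hx1 hab
      have h2 : x ^ a ≤ 1 := Real.rpow_le_one hx.le hx1 ha
      rw [abs_of_nonpos (by linarith), abs_of_nonpos (by linarith)]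
      linarith
    · have h1 : x ^ a ≤ x ^ b := Real.rpow_le_rpow_of_exponent_le hx1 hab
      have h2 : 1 ≤ x ^ a := Real.one_le_rpow hx1 ha
      rw [abs_of_nonneg (by linarith), abs_of_nonneg (by linarith)]
      linarith

/-- Key scalar inequality: `x (x^((γ-1)/2) - 1)² ≤ 2 (x^γ - γ x + γ - 1)`. -/
lemma key_scalar (γ : ℝ) (hγ : 1 < γ) (x : ℝ) (hx : 0 ≤ x) :
    x * (x ^ ((γ - 1) / 2) - 1) ^ 2 ≤ 2 * (x ^ γ - γ * x + γ - 1) := by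
  rcases eq_or_lt_of_le hx with h0 | hxpos
  · rw [← h0, Real.zero_rpow (show (γ - 1) / 2 ≠ 0 by intro h; rw [div_eq_zero_iff] at h; rcases h with h | h <;> linarith),
      Real.zero_rpow (show γ ≠ 0 by intro h; linarith)]
    nlinarith
  · -- AM-GM with weights 1/(2γ+1), 2/(2γ+1), (2γ-2)/(2γ+1)
    have hW : (0:ℝ) < 2 * γ + 1 := by linarith
    have amgm := Real.geom_mean_le_arith_mean3_weighted
      (w₁ := 1 / (2 * γ + 1)) (w₂ := 2 / (2 * γ + 1)) (w₃ := (2 * γ - 2) / (2 * γ + 1))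
      (p₁ := x ^ γ) (p₂ := x ^ ((γ + 1) / 2)) (p₃ := 1)
      (div_nonneg one_pos.le hW.le) (div_nonneg two_pos.le hW.le)
      (div_nonneg (by linarith) hW.le)
      (Real.rpow_nonneg hx _) (Real.rpow_nonneg hx _) zero_le_one
      (by field_simp; ring)
    have hgm : (x ^ γ) ^ (1 / (2 * γ + 1)) * (x ^ ((γ + 1) / 2)) ^ (2 / (2 * γ + 1)) *
        (1:ℝ) ^ ((2 * γ - 2) / (2 * γ + 1)) = x := by
      rw [Real.one_rpow, mul_one, ← Real.rpow_mul hx, ← Real.rpow_mul hx,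
        ← Real.rpow_add hxpos,
        show γ * (1 / (2 * γ + 1)) + (γ + 1) / 2 * (2 / (2 * γ + 1)) = 1 by
          field_simp; ring, Real.rpow_one]
    rw [hgm] at amgm
    -- amgm : x ≤ w₁ x^γ + w₂ x^((γ+1)/2) + w₃
    have key : (2 * γ + 1) * x ≤ x ^ γ + 2 * x ^ ((γ + 1) / 2) + (2 * γ - 2) := by
      have h := mul_le_mul_of_nonneg_left amgm (le_of_lt hW)
      calc (2 * γ + 1) * x ≤ (2 * γ + 1) * (1 / (2 * γ + 1) * x ^ γ +
            2 / (2 * γ + 1) * x ^ ((γ + 1) / 2) + (2 * γ - 2) / (2 * γ + 1) * 1) := h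
        _ = x ^ γ + 2 * x ^ ((γ + 1) / 2) + (2 * γ - 2) := by field_simp
    -- Expand the LHS
    have e1 : x ^ ((γ - 1) / 2) * x ^ ((γ - 1) / 2) = x ^ (γ - 1) := by
      rw [← Real.rpow_add hxpos]; ring_nf
    have e2 : x ^ (γ - 1) * x = x ^ γ := by
      rw [← Real.rpow_add_one (ne_of_gt hxpos)]; ring_nf
    have e3 : x ^ ((γ - 1) / 2) * x = x ^ ((γ + 1) / 2) := by
      rw [← Real.rpow_add_one (ne_of_gt hxpos)]; ring_nf
    have expand : x * (x ^ ((γ - 1) / 2) - 1) ^ 2 =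
        x ^ γ - 2 * x ^ ((γ + 1) / 2) + x := by
      calc x * (x ^ ((γ - 1) / 2) - 1) ^ 2
          = x ^ ((γ - 1) / 2) * x ^ ((γ - 1) / 2) * x -
            2 * (x ^ ((γ - 1) / 2) * x) + x := by ring
        _ = x ^ γ - 2 * x ^ ((γ + 1) / 2) + x := by rw [e1, e2, e3]
    rw [expand]
    linarith

/-- For `μ(ρ) = ρ^((s+3)/2)` with `s ≥ −1` and `γ ≥ s+2`, and `ρ̄ ∈ [δ, R]`:
`ρ·|μ'(ρ) − μ'(ρ̄)|² ≤ C·h_γ(ρ|ρ̄)` for all `ρ ≥ 0`. -/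
theorem rho_mu_prime_diff_sq_le (γ s δ R : ℝ) (hγ : 1 < γ) (hs : -1 ≤ s) (hγs : s + 2 ≤ γ)
    (hδ : 0 < δ) (hδR : δ ≤ R) :
    ∃ C > (0:ℝ), ∀ ρ ρb : ℝ, 0 ≤ ρ → ρb ∈ Set.Icc δ R →
      ρ * |(s + 3) / 2 * ρ ^ ((s + 1) / 2) - (s + 3) / 2 * ρb ^ ((s + 1) / 2)| ^ 2 ≤
        C * (ρ ^ γ / (γ - 1) - ρb ^ γ / (γ - 1) - (γ * ρb ^ (γ - 1) / (γ - 1)) * (ρ - ρb)) := by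
  set c : ℝ := (s + 3) / 2 with hc
  have hcpos : 0 < c := by rw [hc]; linarith
  refine ⟨2 * c ^ 2 * (γ - 1) * δ ^ (s + 2 - γ),
    mul_pos (mul_pos (mul_pos two_pos (pow_pos hcpos 2)) (by linarith))
      (Real.rpow_pos_of_pos hδ _), ?_⟩
  intro ρ ρb hρ hρb
  obtain ⟨hδρb, hρbR⟩ := hρb
  have hρbpos : 0 < ρb := lt_of_lt_of_le hδ hδρb
  set α : ℝ := (s + 1) / 2 with hα
  have hα0 : 0 ≤ α := by rw [hα]; linarith
  set β : ℝ := (γ - 1) / 2 with hβ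
  have hαβ : α ≤ β := by rw [hα, hβ]; linarith
  set x : ℝ := ρ / ρb with hxdef
  have hx0 : 0 ≤ x := div_nonneg hρ hρbpos.le
  have hρx : ρ = ρb * x := by rw [hxdef, mul_div_cancel₀ _ (ne_of_gt hρbpos)]
  set g : ℝ := x ^ γ - γ * x + γ - 1 with hg
  have hkey : x * (x ^ β - 1) ^ 2 ≤ 2 * g := key_scalar γ hγ x hx0
  have habs : |x ^ α - 1| ≤ |x ^ β - 1| := abs_rpow_sub_one_le α β x hα0 hαβ hx0
  have hchain : x * |x ^ α - 1| ^ 2 ≤ 2 * g := by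
    calc x * |x ^ α - 1| ^ 2 ≤ x * |x ^ β - 1| ^ 2 := by
          apply mul_le_mul_of_nonneg_left _ hx0
          exact pow_le_pow_left₀ (abs_nonneg _) habs 2
      _ = x * (x ^ β - 1) ^ 2 := by rw [sq_abs]
      _ ≤ 2 * g := hkey
  have hg0 : 0 ≤ g := by nlinarith [sq_nonneg (x ^ β - 1), mul_nonneg hx0 (sq_nonneg (x ^ β - 1))]
  -- LHS equals c² ρb^(s+2) (x |x^α - 1|²)
  have hmul : ρ ^ α = ρb ^ α * x ^ α := by
    rw [hρx, Real.mul_rpow hρbpos.le hx0]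
  have hLHS : ρ * |c * ρ ^ α - c * ρb ^ α| ^ 2 =
      c ^ 2 * ρb ^ (s + 2) * (x * |x ^ α - 1| ^ 2) := by
    rw [hmul]
    have : c * (ρb ^ α * x ^ α) - c * ρb ^ α = c * ρb ^ α * (x ^ α - 1) := by ring
    rw [this, abs_mul, abs_of_nonneg (by positivity : (0:ℝ) ≤ c * ρb ^ α)]
    have hps : ρb ^ α * ρb ^ α * ρb = ρb ^ (s + 2) := by
      rw [← Real.rpow_add hρbpos, ← Real.rpow_add_one (ne_of_gt hρbpos),
        show α + α + 1 = s + 2 by rw [hα]; ring]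
    rw [hρx]
    calc ρb * x * (c * ρb ^ α * |x ^ α - 1|) ^ 2
        = c ^ 2 * (ρb ^ α * ρb ^ α * ρb) * (x * |x ^ α - 1| ^ 2) := by ring
      _ = c ^ 2 * ρb ^ (s + 2) * (x * |x ^ α - 1| ^ 2) := by rw [hps]
  -- RHS relative entropy equals ρb^γ / (γ-1) * g
  have hrel : ρ ^ γ / (γ - 1) - ρb ^ γ / (γ - 1) - (γ * ρb ^ (γ - 1) / (γ - 1)) * (ρ - ρb) =
      ρb ^ γ / (γ - 1) * g := by
    have h1 : ρ ^ γ = ρb ^ γ * x ^ γ := by rw [hρx, Real.mul_rpow hρbpos.le hx0]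
    have h2 : ρb ^ (γ - 1) * (ρ - ρb) = ρb ^ γ * (x - 1) := by
      have e : ρb ^ (γ - 1) * ρb = ρb ^ γ := by
        rw [← Real.rpow_add_one (ne_of_gt hρbpos)]; ring_nf
      calc ρb ^ (γ - 1) * (ρ - ρb) = ρb ^ (γ - 1) * ρb * (x - 1) := by rw [hρx]; ring
        _ = ρb ^ γ * (x - 1) := by rw [e]
    rw [hg]
    have hne : γ - 1 ≠ 0 := by intro h; linarith
    field_simp
    linear_combination h1 - γ * h2
  rw [hLHS, hrel]
  -- reduce to ρb^(s+2) ≤ δ^(s+2-γ) ρb^γ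
  have hbase : ρb ^ (s + 2 - γ) ≤ δ ^ (s + 2 - γ) :=
    Real.rpow_le_rpow_of_nonpos hδ hδρb (by linarith)
  have hsplit : ρb ^ (s + 2) = ρb ^ (s + 2 - γ) * ρb ^ γ := by
    rw [← Real.rpow_add hρbpos]; ring_nf
  have hρbγ : 0 < ρb ^ γ := Real.rpow_pos_of_pos hρbpos γ
  have step1 : c ^ 2 * ρb ^ (s + 2) * (x * |x ^ α - 1| ^ 2) ≤
      c ^ 2 * ρb ^ (s + 2) * (2 * g) := by
    apply mul_le_mul_of_nonneg_left hchain
    positivity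
  refine le_trans step1 ?_
  have hfinal : c ^ 2 * ρb ^ (s + 2) * (2 * g) =
      2 * c ^ 2 * (ρb ^ (s + 2 - γ) * ρb ^ γ) * g := by rw [← hsplit]; ring
  rw [hfinal]
  have hne : γ - 1 ≠ 0 := by linarith
  have : 2 * c ^ 2 * (γ - 1) * δ ^ (s + 2 - γ) * (ρb ^ γ / (γ - 1) * g) =
      2 * c ^ 2 * (δ ^ (s + 2 - γ) * ρb ^ γ) * g := by field_simp
  rw [this]
  apply mul_le_mul_of_nonneg_right _ hg0
  have h2c : (0:ℝ) ≤ 2 * c ^ 2 := by positivity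
  apply mul_le_mul_of_nonneg_left _ h2c
  exact mul_le_mul_of_nonneg_right hbase hρbγ.le
end
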